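/- For every dimension d ≥ 3, every ε > 0 and every b > 0 one can find b̃ > b and functions χ₁, χ₂ : ℝ^d → ℝ which are Lipschitz continuous and continuously differentiable outside a closed Lebesgue-null set, such that χ₁(x)² + χ₂(x)² = 1 for all x, χ₁(x) = 1 whenever |x| ≤ b, χ₁(x) = 0 whenever |x| > b̃, and |∇χ₁(x)|² + |∇χ₂(x)|² ≤ ε·|x|⁻² at every point x ≠ 0 at which χ₁ and χ₂ are differentiable. -/

import Mathlib

/-!
Take `χ₁ = cos θ` and `χ₂ = sin θ` for an angle `θ x = ψ (log (‖x‖ / b) / L)` that rises from `0`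
to `π / 2`, where `ψ` is a fixed `C¹` step. Then `‖∇χ₁‖² + ‖∇χ₂‖² = ‖∇θ‖² ≤ (sup |ψ'| / L)² ‖x‖⁻²`:
the logarithmic scale makes the gradient as small as we like, at the price of the large outer
radius `b̃ = b e^L`. Since `θ` vanishes near the origin, `χ₁` and `χ₂` are `C¹` everywhere.
-/

open MeasureTheory Real Filter Topology

theorem exists_pos_abs_deriv_le {ψ : ℝ → ℝ} (hψ : ContDiff ℝ 1 ψ)
    (h0 : ∀ t ≤ 0, ψ t = ψ 0) (h1 : ∀ t, 1 ≤ t → ψ t = ψ 1) :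
    ∃ C, 0 < C ∧ ∀ t, |deriv ψ t| ≤ C := by
  have hsupp : HasCompactSupport (deriv ψ) := by
    refine HasCompactSupport.intro (isCompact_Icc (a := 0) (b := 1)) fun t ht => ?_
    rcases not_and_or.1 ht with ht | ht <;> push Not at ht
    · have : ψ =ᶠ[𝓝 t] fun _ => ψ 0 := (eventually_lt_nhds ht).mono fun s hs => h0 s hs.le
      simp [this.deriv_eq]
    · have : ψ =ᶠ[𝓝 t] fun _ => ψ 1 := (eventually_gt_nhds ht).mono fun s hs => h1 s hs.le
      simp [this.deriv_eq]
  obtain ⟨C, hC⟩ := (hψ.continuous_deriv le_rfl).bounded_above_of_compact_support hsupp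
  exact ⟨max C 1, by positivity, fun t => (hC t).trans (le_max_left _ _)⟩

theorem norm_fderiv_cos_sq_add_norm_fderiv_sin_sq {F : Type*} [NormedAddCommGroup F]
    [NormedSpace ℝ F] {u : F → ℝ} {x : F} (hu : DifferentiableAt ℝ u x) :
    ‖fderiv ℝ (fun y => cos (u y)) x‖ ^ 2 + ‖fderiv ℝ (fun y => sin (u y)) x‖ ^ 2 =
      ‖fderiv ℝ u x‖ ^ 2 := by
  rw [hu.hasFDerivAt.cos.fderiv, hu.hasFDerivAt.sin.fderiv, norm_smul, norm_smul, mul_pow,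
    mul_pow, Real.norm_eq_abs, Real.norm_eq_abs, abs_neg, sq_abs, sq_abs, ← add_mul,
    sin_sq_add_cos_sq, one_mul]

section LogRadial

variable {E : Type*} [NormedAddCommGroup E] {ψ : ℝ → ℝ} {b L C : ℝ}

noncomputable def logRadial (ψ : ℝ → ℝ) (b L : ℝ) (x : E) : ℝ := ψ (log (‖x‖ / b) / L)

theorem logRadial_eq_zero (hψ : ∀ t ≤ 0, ψ t = 0) (hL : 0 ≤ L) {x : E} (hx : ‖x‖ ≤ b) :
    logRadial ψ b L x = 0 :=
  hψ _ <| div_nonpos_of_nonpos_of_nonneg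
    (log_nonpos (div_nonneg (norm_nonneg x) ((norm_nonneg x).trans hx))
      (div_le_one_of_le₀ hx ((norm_nonneg x).trans hx))) hL

theorem logRadial_eq_of_mul_exp_le {c : ℝ} (hψ : ∀ t, 1 ≤ t → ψ t = c) (hb : 0 < b)
    (hL : 0 < L) {x : E} (hx : b * exp L ≤ ‖x‖) : logRadial ψ b L x = c := by
  refine hψ _ ((one_le_div hL).2 ?_)
  rw [le_log_iff_exp_le (div_pos ((by positivity : 0 < b * exp L).trans_le hx) hb),
    le_div_iff₀ hb]
  linarith

theorem logRadial_eventuallyEq_zero (hψ : ∀ t ≤ 0, ψ t = 0) (hL : 0 ≤ L) {x : E}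
    (hx : ‖x‖ < b) : logRadial ψ b L =ᶠ[𝓝 x] 0 := by
  filter_upwards [Metric.isOpen_ball.mem_nhds (mem_ball_zero_iff.2 hx)] with y hy
  exact logRadial_eq_zero hψ hL (mem_ball_zero_iff.1 hy).le

variable [InnerProductSpace ℝ E]

theorem contDiff_logRadial {n : WithTop ℕ∞} (hψ : ContDiff ℝ n ψ) (hψ0 : ∀ t ≤ 0, ψ t = 0)
    (hb : 0 < b) (hL : 0 ≤ L) : ContDiff ℝ n (logRadial (E := E) ψ b L) := by
  refine contDiff_iff_contDiffAt.2 fun x => ?_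
  rcases eq_or_ne x 0 with rfl | hx
  · exact contDiffAt_const.congr_of_eventuallyEq
      (logRadial_eventuallyEq_zero hψ0 hL (by simpa using hb))
  · have hlog : ContDiffAt ℝ n (fun y : E => log (‖y‖ / b)) x :=
      (contDiffAt_log.2 (div_ne_zero (norm_ne_zero_iff.2 hx) hb.ne')).comp x
        ((contDiffAt_norm ℝ hx).div_const b)
    exact hψ.contDiffAt.comp x (hlog.div_const L)

theorem hasFDerivAt_logRadial {x : E} (hψ : DifferentiableAt ℝ ψ (log (‖x‖ / b) / L))
    (hb : b ≠ 0) (hx : x ≠ 0) :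
    HasFDerivAt (logRadial ψ b L)
      ((deriv ψ (log (‖x‖ / b) / L) * (‖x‖⁻¹ / L)) • fderiv ℝ (‖·‖) x) x := by
  have hprofile : HasDerivAt (fun r => ψ (log (r / b) / L))
      (deriv ψ (log (‖x‖ / b) / L) * (‖x‖⁻¹ / L)) ‖x‖ := by
    have hlog := (((hasDerivAt_id ‖x‖).div_const b).log
      (div_ne_zero (norm_ne_zero_iff.2 hx) hb)).div_const L
    refine (hψ.hasDerivAt.comp ‖x‖ hlog).congr_deriv ?_
    simp only [id]
    field_simp
  exact hprofile.comp_hasFDerivAt x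
    ((contDiffAt_norm ℝ hx).differentiableAt one_ne_zero).hasFDerivAt

theorem norm_fderiv_logRadial_le (hψ : Differentiable ℝ ψ) (hC : ∀ t, |deriv ψ t| ≤ C)
    (hb : b ≠ 0) {x : E} (hx : x ≠ 0) :
    ‖fderiv ℝ (logRadial ψ b L) x‖ ≤ C / (|L| * ‖x‖) := by
  have hnorm : ‖fderiv ℝ (‖·‖) x‖ ≤ 1 := by
    simpa using norm_fderiv_le_of_lipschitz ℝ (lipschitzWith_one_norm (E := E)) (x₀ := x)
  have hC0 : 0 ≤ C := (abs_nonneg _).trans (hC 0)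
  rw [(hasFDerivAt_logRadial (hψ _) hb hx).fderiv, norm_smul, Real.norm_eq_abs, abs_mul,
    abs_div, abs_inv, abs_norm]
  calc |deriv ψ _| * (‖x‖⁻¹ / |L|) * ‖fderiv ℝ (‖·‖) x‖ ≤ C * (‖x‖⁻¹ / |L|) * 1 := by
        gcongr
        exact hC _
    _ = C / (|L| * ‖x‖) := by field_simp

theorem lipschitzWith_logRadial (hψ : ContDiff ℝ 1 ψ) (hψ0 : ∀ t ≤ 0, ψ t = 0)
    (hC : ∀ t, |deriv ψ t| ≤ C) (hb : 0 < b) (hL : 0 < L) :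
    LipschitzWith (C / (L * b)).toNNReal (logRadial (E := E) ψ b L) := by
  refine lipschitzWith_of_nnnorm_fderiv_le
    ((contDiff_logRadial hψ hψ0 hb hL.le).differentiable one_ne_zero) fun x => ?_
  rw [← NNReal.coe_le_coe, coe_nnnorm, Real.coe_toNNReal']
  rcases lt_or_ge ‖x‖ b with hx | hx
  · simp [(logRadial_eventuallyEq_zero hψ0 hL.le hx).fderiv_eq]
  · have hx0 : x ≠ 0 := norm_pos_iff.1 (hb.trans_le hx)
    have hC0 : 0 ≤ C := (abs_nonneg _).trans (hC 0)
    calc ‖fderiv ℝ (logRadial ψ b L) x‖ ≤ C / (|L| * ‖x‖) :=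
          norm_fderiv_logRadial_le (hψ.differentiable one_ne_zero) hC hb.ne' hx0
      _ ≤ C / (L * b) := by rw [abs_of_pos hL]; gcongr
      _ ≤ _ := le_max_left _ _

end LogRadial

theorem stmt_0 (d : ℕ) (ε b : ℝ) (hε : 0 < ε) (hb : 0 < b) :
    ∃ (btil : ℝ) (χ₁ χ₂ : EuclideanSpace ℝ (Fin d) → ℝ)
      (S : Set (EuclideanSpace ℝ (Fin d))),
      b < btil ∧
      (∃ K : NNReal, LipschitzWith K χ₁) ∧
      (∃ K : NNReal, LipschitzWith K χ₂) ∧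
      IsClosed S ∧ volume S = 0 ∧
      ContDiffOn ℝ 1 χ₁ Sᶜ ∧ ContDiffOn ℝ 1 χ₂ Sᶜ ∧
      (∀ x, χ₁ x ^ 2 + χ₂ x ^ 2 = 1) ∧
      (∀ x, ‖x‖ ≤ b → χ₁ x = 1) ∧
      (∀ x, btil < ‖x‖ → χ₁ x = 0) ∧
      (∀ x : EuclideanSpace ℝ (Fin d), x ≠ 0 →
        DifferentiableAt ℝ χ₁ x → DifferentiableAt ℝ χ₂ x →
        ‖fderiv ℝ χ₁ x‖ ^ 2 + ‖fderiv ℝ χ₂ x‖ ^ 2 ≤ ε / ‖x‖ ^ 2) := by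
  set ψ : ℝ → ℝ := fun t => π / 2 * smoothTransition t
  have hψ : ContDiff ℝ 1 ψ := contDiff_const.mul smoothTransition.contDiff
  have hψ0 : ∀ t ≤ 0, ψ t = 0 := fun t ht => by simp [ψ, smoothTransition.zero_of_nonpos ht]
  have hψ1 : ∀ t, 1 ≤ t → ψ t = π / 2 := fun t ht => by
    simp [ψ, smoothTransition.one_of_one_le ht]
  obtain ⟨C, hC, hψ'⟩ := exists_pos_abs_deriv_le hψ
    (fun t ht => (hψ0 t ht).trans (hψ0 0 le_rfl).symm)
    (fun t ht => (hψ1 t ht).trans (hψ1 1 le_rfl).symm)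
  set L := C / √ε
  have hL : 0 < L := by positivity
  set u := logRadial (E := EuclideanSpace ℝ (Fin d)) ψ b L
  have hu : ContDiff ℝ 1 u := contDiff_logRadial hψ hψ0 hb hL.le
  have hlip := lipschitzWith_logRadial (E := EuclideanSpace ℝ (Fin d)) hψ hψ0 hψ' hb hL
  refine ⟨b * exp L, fun x => cos (u x), fun x => sin (u x), ∅,
    lt_mul_of_one_lt_right hb (one_lt_exp_iff.2 hL), ⟨_, lipschitzWith_cos.comp hlip⟩,
    ⟨_, lipschitzWith_sin.comp hlip⟩, isClosed_empty, measure_empty,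
    (contDiff_cos.comp hu).contDiffOn, (contDiff_sin.comp hu).contDiffOn,
    fun x => cos_sq_add_sin_sq _, fun x hx => ?_, fun x hx => ?_, fun x hx _ _ => ?_⟩
  · simp [u, logRadial_eq_zero hψ0 hL.le hx]
  · simp [u, logRadial_eq_of_mul_exp_le hψ1 hb hL hx.le]
  · rw [norm_fderiv_cos_sq_add_norm_fderiv_sin_sq (hu.differentiable one_ne_zero x)]
    have hLε : L * √ε = C := div_mul_cancel₀ C (by positivity)
    have hgrad : ‖fderiv ℝ u x‖ ≤ √ε / ‖x‖ := by
      refine (norm_fderiv_logRadial_le (hψ.differentiable one_ne_zero) hψ' hb.ne' hx).trans_eq ?_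
      rw [abs_of_pos hL, ← hLε]
      field_simp
    calc ‖fderiv ℝ u x‖ ^ 2 ≤ (√ε / ‖x‖) ^ 2 := by gcongr
      _ = ε / ‖x‖ ^ 2 := by rw [div_pow, sq_sqrt hε.le]
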